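/- arXiv:2101.03331 — 4 statements merged into one kernel-verified Lean document; each statement's English description precedes it below -/
import Mathlib

section
/- Generalized refined Kato inequality for symmetric matrices (key inequality in the proof of Lemma 4.4): let n ≥ 1, let A be a symmetric n×n real matrix, let v ∈ ℝⁿ and let t > 0. Then ((t+n)/(t+n−1))·‖A·v‖² ≤ ‖v‖²·(tr A)²/t + ‖v‖²·‖A‖²_HS. -/
open Finset
set_option maxHeartbeats 2000000 in

lemma kato_key {n : ℕ} (A : Matrix (Fin n) (Fin n) ℝ) (hA : A.IsSymm) (v : Fin n → ℝ)
    (S K c H l : ℝ) (w : Fin n → ℝ)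
    (hS : S = ∑ i, (v i)^2) (hK : K = ∑ i, (∑ j, A i j * v j)^2)
    (hc : c = ∑ i, A i i) (hH : H = ∑ i, ∑ j, (A i j)^2)
    (hl : l = ∑ i, (∑ j, A i j * v j) * v i)
    (hw : ∀ i, w i = S * (∑ j, A i j * v j) - l * v i) :
    0 ≤ ((n:ℝ)-1)^2 * S^2 * (S^2*H - 2*S*K + l^2) - ((n:ℝ)-1) * S^2 * (S*c - l)^2 := by
  set m : ℝ := (n:ℝ) - 1 with hm
  set x : ℝ := S*c - l with hx
  set g : ℝ := x - m*l with hg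
  -- scalar facts
  have hwv : ∑ i, w i * v i = 0 := by
    calc ∑ i, w i * v i = ∑ i, (S * ((∑ j, A i j * v j) * v i) - l * (v i)^2) :=
          sum_congr rfl fun i _ => by rw [hw]; ring
    _ = S * (∑ i, (∑ j, A i j * v j) * v i) - l * ∑ i, (v i)^2 := by
          rw [sum_sub_distrib, ← mul_sum, ← mul_sum]
    _ = 0 := by rw [← hl, ← hS]; ring
  have hvw : ∑ i, v i * w i = 0 := by
    rw [← hwv]; exact sum_congr rfl fun i _ => by ring
  have hwu : ∑ i, w i * (∑ j, A i j * v j) = S*K - l^2 := by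
    calc ∑ i, w i * (∑ j, A i j * v j)
        = ∑ i, (S * (∑ j, A i j * v j)^2 - l * ((∑ j, A i j * v j) * v i)) :=
          sum_congr rfl fun i _ => by rw [hw]; ring
    _ = S * (∑ i, (∑ j, A i j * v j)^2) - l * ∑ i, (∑ j, A i j * v j) * v i := by
          rw [sum_sub_distrib, ← mul_sum, ← mul_sum]
    _ = S*K - l^2 := by rw [← hl, ← hK]; ring
  have hww : ∑ i, (w i)^2 = S*(S*K - l^2) := by
    calc ∑ i, (w i)^2
        = ∑ i, (S * (w i * (∑ j, A i j * v j)) - l * (w i * v i)) :=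
          sum_congr rfl fun i _ => by rw [hw]; ring
    _ = S * (∑ i, w i * (∑ j, A i j * v j)) - l * ∑ i, w i * v i := by
          rw [sum_sub_distrib, ← mul_sum, ← mul_sum]
    _ = S*(S*K - l^2) := by rw [hwu, hwv]; ring
  -- generic double-sum helpers
  have hprod : ∀ f g : Fin n → ℝ, ∑ i, ∑ j, f i * g j = (∑ i, f i) * (∑ i, g i) := by
    intro f g
    rw [← Finset.sum_mul_sum]
  have hdiag : ∀ f : Fin n → ℝ, ∑ i, ∑ j, (if i = j then f i else 0) = ∑ i, f i := by
    intro f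
    refine sum_congr rfl fun i _ => ?_
    rw [Finset.sum_ite_eq]
    simp
  -- the fifteen double sums
  have e1 : ∑ i, ∑ j, A i j * A i j = H := by
    rw [hH]; exact sum_congr rfl fun i _ => sum_congr rfl fun j _ => (sq (A i j)).symm ▸ by ring
  have e2 : ∑ i, ∑ j, A i j * (v i * v j) = l := by
    calc ∑ i, ∑ j, A i j * (v i * v j) = ∑ i, (∑ j, A i j * v j) * v i := by
          refine sum_congr rfl fun i _ => ?_
          rw [sum_mul]
          exact sum_congr rfl fun j _ => by ring
    _ = l := hl.symm
  have e3 : ∑ i, ∑ j, A i j * (v i * w j) = S*K - l^2 := by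
    rw [Finset.sum_comm]
    calc ∑ j, ∑ i, A i j * (v i * w j) = ∑ j, w j * (∑ k, A j k * v k) := by
          refine sum_congr rfl fun j _ => ?_
          rw [mul_sum]
          exact sum_congr rfl fun i _ => by rw [hA.apply i j]; ring
    _ = S*K - l^2 := hwu
  have e4 : ∑ i, ∑ j, A i j * (w i * v j) = S*K - l^2 := by
    calc ∑ i, ∑ j, A i j * (w i * v j) = ∑ i, w i * (∑ j, A i j * v j) := by
          refine sum_congr rfl fun i _ => ?_
          rw [mul_sum]
          exact sum_congr rfl fun j _ => by ring
    _ = S*K - l^2 := hwu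
  have e5 : ∑ i, ∑ j, (if i = j then A i i else 0) = c := by rw [hdiag, hc]
  have e6 : ∑ i, ∑ j, (v i)^2 * (v j)^2 = S * S := by
    rw [hprod, ← hS]
  have e7 : ∑ i, ∑ j, (v i)^2 * (w j)^2 = S * (S*(S*K - l^2)) := by
    rw [hprod, ← hS, hww]
  have e8 : ∑ i, ∑ j, (w i)^2 * (v j)^2 = (S*(S*K - l^2)) * S := by
    rw [hprod, ← hS, hww]
  have e9 : ∑ i, ∑ j, (v i * w i) * (v j * w j) = 0 := by
    rw [hprod, hvw]; ring
  have e10 : ∑ i, ∑ j, (v i)^2 * (v j * w j) = 0 := by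
    rw [hprod, hvw]; ring
  have e11 : ∑ i, ∑ j, (v i * w i) * (v j)^2 = 0 := by
    rw [hprod, hvw]; ring
  have e12 : ∑ i : Fin n, ∑ j : Fin n, (if i = j then (1:ℝ) else 0) = (n:ℝ) := by
    rw [hdiag]; simp
  have e13 : ∑ i, ∑ j, (if i = j then v i * w i else 0) = 0 := by rw [hdiag, hvw]
  have e15 : ∑ i, ∑ j, (if i = j then (v i)^2 else 0) = S := by rw [hdiag, ← hS]
  -- Bessel: the square expansion
  have key : (0:ℝ) ≤ ∑ i, ∑ j,
      (m*S^2*(A i j) - m*(v i * w j) - m*(w i * v j) - S*x*(if i = j then (1:ℝ) else 0)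
        + g*(v i * v j))^2 := sum_nonneg fun i _ => sum_nonneg fun j _ => sq_nonneg _
  have expand : ∑ i, ∑ j,
      (m*S^2*(A i j) - m*(v i * w j) - m*(w i * v j) - S*x*(if i = j then (1:ℝ) else 0)
        + g*(v i * v j))^2
      = (m*S^2)^2 * (∑ i, ∑ j, A i j * A i j)
      + m^2 * (∑ i, ∑ j, (v i)^2 * (w j)^2)
      + m^2 * (∑ i, ∑ j, (w i)^2 * (v j)^2)
      + (S*x)^2 * (∑ i : Fin n, ∑ j : Fin n, (if i = j then (1:ℝ) else 0))
      + g^2 * (∑ i, ∑ j, (v i)^2 * (v j)^2)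
      + (-(2*m^2*S^2)) * (∑ i, ∑ j, A i j * (v i * w j))
      + (-(2*m^2*S^2)) * (∑ i, ∑ j, A i j * (w i * v j))
      + (-(2*m*S^3*x)) * (∑ i, ∑ j, (if i = j then A i i else 0))
      + (2*m*S^2*g) * (∑ i, ∑ j, A i j * (v i * v j))
      + (2*m^2) * (∑ i, ∑ j, (v i * w i) * (v j * w j))
      + (4*m*S*x) * (∑ i, ∑ j, (if i = j then v i * w i else 0))
      + (-(2*m*g)) * (∑ i, ∑ j, (v i)^2 * (v j * w j))
      + (-(2*m*g)) * (∑ i, ∑ j, (v i * w i) * (v j)^2)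
      + (-(2*S*x*g)) * (∑ i, ∑ j, (if i = j then (v i)^2 else 0)) := by
    simp only [mul_sum]
    rw [← sum_add_distrib, ← sum_add_distrib, ← sum_add_distrib, ← sum_add_distrib,
      ← sum_add_distrib, ← sum_add_distrib, ← sum_add_distrib, ← sum_add_distrib,
      ← sum_add_distrib, ← sum_add_distrib, ← sum_add_distrib, ← sum_add_distrib,
      ← sum_add_distrib]
    refine sum_congr rfl fun i _ => ?_
    rw [← sum_add_distrib, ← sum_add_distrib, ← sum_add_distrib, ← sum_add_distrib,
      ← sum_add_distrib, ← sum_add_distrib, ← sum_add_distrib, ← sum_add_distrib,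
      ← sum_add_distrib, ← sum_add_distrib, ← sum_add_distrib, ← sum_add_distrib,
      ← sum_add_distrib]
    refine sum_congr rfl fun j _ => ?_
    split_ifs with h
    · subst h; ring
    · ring
  rw [expand, e1, e2, e3, e4, e5, e6, e7, e8, e9, e10, e11, e12, e13, e15] at key
  have hn : ((n:ℝ)) = m + 1 := by rw [hm]; ring
  rw [hg, hx, hn] at key
  rw [hx]
  linarith [key]

/-- Generalized refined Kato inequality for symmetric matrices: for `A` a symmetric
`n × n` real matrix, `v ∈ ℝⁿ` and `t > 0`,
`((t+n)/(t+n−1)) ‖A·v‖² ≤ ‖v‖² (tr A)²/t + ‖v‖² ‖A‖²_HS`. -/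
theorem kato_matrix_inequality (n : ℕ) (hn : 1 ≤ n)
    (A : Matrix (Fin n) (Fin n) ℝ) (hA : A.IsSymm)
    (v : Fin n → ℝ) (t : ℝ) (ht : 0 < t) :
    ((t + n) / (t + n - 1)) * (∑ i, (∑ j, A i j * v j) ^ 2) ≤
      (∑ i, (v i) ^ 2) * (∑ i, A i i) ^ 2 / t
        + (∑ i, (v i) ^ 2) * (∑ i, ∑ j, (A i j) ^ 2) := by
  rcases eq_or_lt_of_le hn with h1 | h2
  · -- n = 1 : equality case
    subst h1
    simp only [Fin.sum_univ_one, Nat.cast_one]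
    have : t + 1 - 1 = t := by ring
    rw [this]
    rw [div_mul_eq_mul_div, div_le_iff₀ ht]
    have e : (v 0^2*A 0 0^2/t + v 0^2*A 0 0^2)*t = v 0^2*A 0 0^2 + v 0^2*A 0 0^2*t := by
      field_simp
    rw [e]
    nlinarith [sq_nonneg (A 0 0 * v 0)]
  · -- n ≥ 2
    have hn2 : 2 ≤ n := h2
    set S := ∑ i, (v i)^2 with hS
    set K := ∑ i, (∑ j, A i j * v j)^2 with hK
    set c := ∑ i, A i i with hc
    set H := ∑ i, ∑ j, (A i j)^2 with hH
    set l := ∑ i, (∑ j, A i j * v j) * v i with hl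
    have hT : (0:ℝ) < t + n - 1 := by
      have : (1:ℝ) ≤ (n:ℝ) := by exact_mod_cast hn
      linarith
    have hSnn : 0 ≤ S := sum_nonneg fun i _ => sq_nonneg _
    rcases eq_or_lt_of_le hSnn with hS0 | hSpos
    · -- v = 0
      have hv : ∀ i, v i = 0 := by
        intro i
        have := (sum_eq_zero_iff_of_nonneg (fun i _ => sq_nonneg (v i))).mp hS0.symm i (mem_univ i)
        exact pow_eq_zero_iff (by norm_num) |>.mp this
      have hK0 : K = 0 := by
        rw [hK]
        refine sum_eq_zero fun i _ => ?_
        have : (∑ j, A i j * v j) = 0 := sum_eq_zero fun j _ => by rw [hv j, mul_zero]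
        rw [this]; norm_num
      rw [hK0, ← hS0]
      simp
    · -- main case
      have hm1 : (1:ℝ) ≤ (n:ℝ) - 1 := by
        have : (2:ℝ) ≤ (n:ℝ) := by exact_mod_cast hn2
        linarith
      have hm0 : (0:ℝ) < (n:ℝ) - 1 := by linarith
      have keyraw := kato_key A hA v S K c H l
        (fun i => S * (∑ j, A i j * v j) - l * v i) hS hK hc hH hl (fun i => rfl)
      -- divide by m S^2
      have key : (S*c - l)^2 ≤ ((n:ℝ)-1) * (S^2*H - 2*S*K + l^2) := by
        have h := keyraw
        have hfac : ((n:ℝ)-1)^2 * S^2 * (S^2*H - 2*S*K + l^2) - ((n:ℝ)-1) * S^2 * (S*c - l)^2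
            = (((n:ℝ)-1) * S^2) * (((n:ℝ)-1) * (S^2*H - 2*S*K + l^2) - (S*c - l)^2) := by ring
        rw [hfac] at h
        have hpos : (0:ℝ) < ((n:ℝ)-1) * S^2 := by positivity
        nlinarith [h, hpos]
      have hCS : l^2 ≤ S * K := by
        rw [hl, hS, hK]
        calc (∑ i, (∑ j, A i j * v j) * v i)^2
            ≤ (∑ i, (∑ j, A i j * v j)^2) * (∑ i, (v i)^2) :=
              Finset.sum_mul_sq_le_sq_mul_sq _ _ _
        _ = (∑ i, (v i)^2) * (∑ i, (∑ j, A i j * v j)^2) := by ring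
      -- assemble
      have step1 : (t+((n:ℝ)-1))*t*(S*c-l)^2 ≤ (t+((n:ℝ)-1))*t*(((n:ℝ)-1)*(S^2*H - 2*S*K + l^2)) :=
        mul_le_mul_of_nonneg_left key (by positivity)
      have step2 : 0 ≤ t*((n:ℝ)-1)*(t+((n:ℝ)-1)-1)*(S*K - l^2) := by
        have h1 : (0:ℝ) ≤ t+((n:ℝ)-1)-1 := by linarith
        have h2 : (0:ℝ) ≤ S*K - l^2 := by linarith
        have h3 : (0:ℝ) ≤ t*((n:ℝ)-1) := by positivity
        exact mul_nonneg (mul_nonneg h3 h1) h2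
      have sq1 : (0:ℝ) ≤ (((n:ℝ)-1)*S*c + t*(S*c-l))^2 := sq_nonneg _
      have G2 : ((n:ℝ)-1)*((t+(n:ℝ))*K*t*S) ≤ ((n:ℝ)-1)*((S*c^2 + S*H*t)*((t+(n:ℝ)-1))*S) := by
        nlinarith [step1, step2, sq1]
      have G1 : (t+(n:ℝ))*K*t*S ≤ (S*c^2 + S*H*t)*((t+(n:ℝ)-1))*S :=
        le_of_mul_le_mul_left G2 hm0
      have G : (t+(n:ℝ))*K*t ≤ (S*c^2 + S*H*t)*(t+(n:ℝ)-1) :=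
        le_of_mul_le_mul_right G1 hSpos
      rw [div_mul_eq_mul_div, div_le_iff₀ hT]
      have expand2 : (S*c^2/t + S*H)*(t+(n:ℝ)-1) = (S*c^2 + S*H*t)*(t+(n:ℝ)-1)/t := by
        field_simp
      calc (t+(n:ℝ))*K ≤ (S*c^2 + S*H*t)*(t+(n:ℝ)-1)/t := by
            rw [le_div_iff₀ ht]; exact G
      _ = (S*c^2/t + S*H)*(t+(n:ℝ)-1) := expand2.symm
end

section
/- Scalar form of the refined Kato inequality (the eigenvalue computation in the proof of Lemma 4.4): let n ≥ 1, let λ₁, …, λₙ be real numbers, let t > 0 and let j ∈ {1, …, n}. Then (λ₁ + ⋯ + λₙ)²/t + λ₁² + ⋯ + λₙ² ≥ ((t+n)/(t+n−1))·λⱼ². -/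
/-- Algebraic core of the Kato inequality. -/
lemma kato_aux (a R P t s : ℝ) (ht : 0 < t) (hs : 0 ≤ s) (hP : 0 ≤ P)
    (hCS : R ^ 2 ≤ s * P) :
    (t + s + 1) * a ^ 2 * t ≤ ((a + R) ^ 2 + (a ^ 2 + P) * t) * (t + s) := by
  rcases eq_or_lt_of_le hs with hs0 | hs0
  · have hR : R = 0 := by nlinarith [sq_nonneg R]
    subst hR; subst hs0
    nlinarith [sq_nonneg a, mul_pos ht ht]
  · nlinarith [sq_nonneg (s * a + (t + s) * R),
      mul_nonneg (mul_nonneg ht.le (add_pos ht hs0).le) (sub_nonneg.2 hCS),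
      mul_pos ht hs0, sq_nonneg R, sq_nonneg a]

/-- Scalar form of the refined Kato inequality: for real numbers `λ₁, …, λₙ`, `t > 0`
and `j ∈ {1, …, n}`, `(λ₁+⋯+λₙ)²/t + λ₁²+⋯+λₙ² ≥ ((t+n)/(t+n−1)) λⱼ²`. -/
theorem kato_scalar_inequality (n : ℕ) (hn : 1 ≤ n) (lam : Fin n → ℝ)
    (t : ℝ) (ht : 0 < t) (j : Fin n) :
    ((t + n) / (t + n - 1)) * (lam j) ^ 2 ≤
      (∑ i, lam i) ^ 2 / t + ∑ i, (lam i) ^ 2 := by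
  set a := lam j with ha
  set R := ∑ i ∈ Finset.univ.erase j, lam i with hR
  set P := ∑ i ∈ Finset.univ.erase j, lam i ^ 2 with hPdef
  have hsum : (∑ i, lam i) = a + R := by
    rw [hR, ha, ← Finset.add_sum_erase _ _ (Finset.mem_univ j)]
  have hsumsq : (∑ i, lam i ^ 2) = a ^ 2 + P := by
    rw [hPdef, ha, ← Finset.add_sum_erase _ _ (Finset.mem_univ j)]
  have hP : 0 ≤ P := Finset.sum_nonneg fun i _ => sq_nonneg _
  have hcard : ((Finset.univ.erase j).card : ℝ) = (n : ℝ) - 1 := by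
    rw [Finset.card_erase_of_mem (Finset.mem_univ j), Finset.card_univ, Fintype.card_fin]
    push_cast [Nat.cast_sub hn]
    ring
  have hCS : R ^ 2 ≤ ((n : ℝ) - 1) * P := by
    have := sq_sum_le_card_mul_sum_sq (s := Finset.univ.erase j) (f := lam)
    rw [← hR, ← hPdef] at this
    calc R ^ 2 ≤ ((Finset.univ.erase j).card : ℝ) * P := by exact_mod_cast this
      _ = ((n : ℝ) - 1) * P := by rw [hcard]
  have hs : (0 : ℝ) ≤ (n : ℝ) - 1 := by
    have : (1 : ℝ) ≤ n := by exact_mod_cast hn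
    linarith
  have key := kato_aux a R P t ((n : ℝ) - 1) ht hs hP hCS
  have hts : 0 < t + ((n : ℝ) - 1) := by linarith
  rw [hsum, hsumsq]
  rw [div_mul_eq_mul_div, div_le_iff₀ (by linarith : (0:ℝ) < t + (n:ℝ) - 1)]
  rw [div_add' _ _ _ (ne_of_gt ht), div_mul_eq_mul_div, le_div_iff₀ ht]
  nlinarith [key]
end

section
/- Circle-chord identity (equation (A.2) in the proof that the level-set distance is locally geodesic): for every a, b ∈ [0, π/2] there exists λ ∈ [0, 1] such that √(λ² + 1 − 2λ·cos a) + √(λ² + 1 − 2λ·cos b) = √(2 − 2·cos(a+b)). -/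
/-!
Put `a = x + y`, `b = x - y`. The chord joining the points at angles `a` and `-b` of the unit
circle meets the radius at angle `0` at distance `λ = cos x / cos y` from the centre, and the two
pieces of the chord have lengths `sin (x ± y) / cos y`; they add up to `2 sin x`, the length of the
whole chord.
-/

open Real

theorem sq_cos_div_cos_add_one_sub_two_mul_cos_add {x y : ℝ} (hy : cos y ≠ 0) :
    (cos x / cos y) ^ 2 + 1 - 2 * (cos x / cos y) * cos (x + y) = (sin (x + y) / cos y) ^ 2 := by
  rw [cos_add, sin_add]
  field_simp
  linear_combination (-cos y ^ 2) * sin_sq_add_cos_sq x + (-cos x ^ 2) * sin_sq_add_cos_sq y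

theorem sq_cos_div_cos_add_one_sub_two_mul_cos_sub {x y : ℝ} (hy : cos y ≠ 0) :
    (cos x / cos y) ^ 2 + 1 - 2 * (cos x / cos y) * cos (x - y) = (sin (x - y) / cos y) ^ 2 := by
  simpa only [cos_neg, ← sub_eq_add_neg] using
    sq_cos_div_cos_add_one_sub_two_mul_cos_add (x := x) (y := -y) (by rwa [cos_neg])

theorem sqrt_two_sub_two_mul_cos_two_mul (x : ℝ) : √(2 - 2 * cos (2 * x)) = 2 * |sin x| := by
  have h : 2 - 2 * cos (2 * x) = (2 * sin x) ^ 2 := by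
    rw [cos_two_mul]
    linear_combination (-4) * sin_sq_add_cos_sq x
  rw [h, sqrt_sq_eq_abs, abs_mul, abs_two]

/-- Circle-chord identity: for every `a, b ∈ [0, π/2]` there exists `λ ∈ [0,1]` with
`√(λ²+1−2λ cos a) + √(λ²+1−2λ cos b) = √(2−2 cos(a+b))`. -/
theorem circle_chord_identity (a b : ℝ)
    (ha : a ∈ Set.Icc (0 : ℝ) (Real.pi / 2))
    (hb : b ∈ Set.Icc (0 : ℝ) (Real.pi / 2)) :
    ∃ l ∈ Set.Icc (0 : ℝ) 1,
      Real.sqrt (l ^ 2 + 1 - 2 * l * Real.cos a)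
        + Real.sqrt (l ^ 2 + 1 - 2 * l * Real.cos b)
        = Real.sqrt (2 - 2 * Real.cos (a + b)) := by
  obtain ⟨ha₀, ha₁⟩ := ha
  obtain ⟨hb₀, hb₁⟩ := hb
  obtain ⟨x, y, rfl, rfl⟩ : ∃ x y, a = x + y ∧ b = x - y :=
    ⟨(a + b) / 2, (a - b) / 2, by ring, by ring⟩
  have hcy : 0 < cos y := cos_pos_of_mem_Ioo ⟨by linarith [pi_pos], by linarith [pi_pos]⟩
  have hsin {z : ℝ} (hz₀ : 0 ≤ z) (hz₁ : z ≤ π / 2) : 0 ≤ sin z :=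
    sin_nonneg_of_nonneg_of_le_pi hz₀ (by linarith [pi_pos])
  refine ⟨cos x / cos y, ⟨?_, ?_⟩, ?_⟩
  · exact div_nonneg (cos_nonneg_of_mem_Icc ⟨by linarith [pi_pos], by linarith⟩) hcy.le
  · rw [div_le_one hcy, ← cos_abs y]
    exact cos_le_cos_of_nonneg_of_le_pi (abs_nonneg y) (by linarith [pi_pos])
      (abs_le.2 ⟨by linarith, by linarith⟩)
  · rw [sq_cos_div_cos_add_one_sub_two_mul_cos_add hcy.ne',
      sq_cos_div_cos_add_one_sub_two_mul_cos_sub hcy.ne',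
      sqrt_sq (div_nonneg (hsin ha₀ ha₁) hcy.le), sqrt_sq (div_nonneg (hsin hb₀ hb₁) hcy.le),
      show x + y + (x - y) = 2 * x by ring, sqrt_two_sub_two_mul_cos_two_mul,
      abs_of_nonneg (hsin (by linarith) (by linarith)), ← add_div, div_eq_iff hcy.ne']
    linear_combination (two_mul_sin_mul_cos x y).symm
end

section
/- Nonnegativity of the derivative from monotonicity of its weighted version (the contradiction argument in the proof of Theorem 5.5): let U : ℝ → ℝ be differentiable at every point of (0,1), suppose the function t ↦ t²·U′(t) is nondecreasing on (0,1), and suppose U is bounded above on (0, 1/2). Then U′(t) ≥ 0 for every t ∈ (0,1). -/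
/-!
If `t²·U′(t)` is nondecreasing and `c := T²·U′(T) < 0`, then `U′(s) ≤ c / s²` on `(0, T)`,
so `s ↦ U s + c / s` is antitone there. Hence `U s ≥ U T + c / T - c / s → +∞` as `s → 0⁺`,
which is impossible for `U` bounded above near `0`.
-/

open Set Filter Topology

theorem antitoneOn_add_div_of_deriv_le_div_sq {U : ℝ → ℝ} {c T : ℝ}
    (hdiff : ∀ s ∈ Ioc 0 T, DifferentiableAt ℝ U s)
    (hderiv : ∀ s ∈ Ioo 0 T, deriv U s ≤ c / s ^ 2) :
    AntitoneOn (fun s => U s + c / s) (Ioc 0 T) := by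
  have hasDeriv : ∀ s ∈ Ioc 0 T, HasDerivAt (fun s => U s + c / s) (deriv U s - c / s ^ 2) s := by
    intro s hs
    have hinv : HasDerivAt (fun x : ℝ => c / x) (-(c / s ^ 2)) s := by
      simpa [div_eq_mul_inv] using (hasDerivAt_inv hs.1.ne').const_mul c
    exact (hdiff s hs).hasDerivAt.add hinv
  apply antitoneOn_of_deriv_nonpos (convex_Ioc 0 T)
  · exact fun s hs => (hasDeriv s hs).continuousAt.continuousWithinAt
  · rw [interior_Ioc]
    exact fun s hs => (hasDeriv s (Ioo_subset_Ioc_self hs)).differentiableAt.differentiableWithinAt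
  · rw [interior_Ioc]
    intro s hs
    rw [(hasDeriv s (Ioo_subset_Ioc_self hs)).deriv]
    linarith [hderiv s hs]

theorem tendsto_nhdsGT_zero_atTop_of_deriv_le_div_sq {U : ℝ → ℝ} {c T : ℝ} (hc : c < 0)
    (hT : 0 < T) (hdiff : ∀ s ∈ Ioc 0 T, DifferentiableAt ℝ U s)
    (hderiv : ∀ s ∈ Ioo 0 T, deriv U s ≤ c / s ^ 2) :
    Tendsto U (𝓝[>] 0) atTop := by
  have hanti := antitoneOn_add_div_of_deriv_le_div_sq hdiff hderiv
  have hlower : ∀ s ∈ Ioc 0 T, U T + c / T + -c * s⁻¹ ≤ U s := by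
    intro s hs
    have := hanti hs (right_mem_Ioc.2 hT) hs.2
    simp only [div_eq_mul_inv] at this ⊢
    linarith
  have hbound : Tendsto (fun s : ℝ => U T + c / T + -c * s⁻¹) (𝓝[>] 0) atTop :=
    tendsto_atTop_add_const_left _ _ (tendsto_inv_nhdsGT_zero.const_mul_atTop (neg_pos.2 hc))
  refine tendsto_atTop_mono' _ ?_ hbound
  filter_upwards [Ioc_mem_nhdsGT hT] using hlower

/-- Nonnegativity of the derivative from monotonicity of its weighted version: if `U`
is differentiable on `(0,1)`, `t ↦ t²·U′(t)` is nondecreasing on `(0,1)`, and `U`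
is bounded above on `(0,1/2)`, then `U′ ≥ 0` on `(0,1)`. -/
theorem deriv_nonneg_of_monotone_weighted (U : ℝ → ℝ)
    (hdiff : ∀ t ∈ Set.Ioo (0 : ℝ) 1, DifferentiableAt ℝ U t)
    (hmono : MonotoneOn (fun t => t ^ 2 * deriv U t) (Set.Ioo (0 : ℝ) 1))
    (hbdd : ∃ M : ℝ, ∀ t ∈ Set.Ioo (0 : ℝ) (1 / 2), U t ≤ M) :
    ∀ t ∈ Set.Ioo (0 : ℝ) 1, 0 ≤ deriv U t := by
  intro t ht
  by_contra! hneg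
  obtain ⟨M, hM⟩ := hbdd
  have hc : t ^ 2 * deriv U t < 0 := mul_neg_of_pos_of_neg (pow_pos ht.1 2) hneg
  have hderiv : ∀ s ∈ Ioo 0 t, deriv U s ≤ t ^ 2 * deriv U t / s ^ 2 := by
    intro s hs
    rw [le_div_iff₀ (pow_pos hs.1 2), mul_comm]
    exact hmono ⟨hs.1, hs.2.trans ht.2⟩ ht hs.2.le
  have htop : Tendsto U (𝓝[>] 0) atTop :=
    tendsto_nhdsGT_zero_atTop_of_deriv_le_div_sq hc ht.1
      (fun s hs => hdiff s ⟨hs.1, hs.2.trans_lt ht.2⟩) hderiv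
  have hbddNear : ∀ᶠ s in 𝓝[>] 0, U s ≤ M :=
    mem_of_superset (Ioo_mem_nhdsGT (by norm_num)) hM
  obtain ⟨s, hMs, hsM⟩ := ((htop.eventually_gt_atTop M).and hbddNear).exists
  exact hsM.not_gt hMs
end
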